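/- If two inverse sequences of abelian groups are pro-isomorphic, then their derived limits (lim^1) are isomorphic. -/

import Mathlib

open CategoryTheory

universe u

/-- The composition of the bonding maps of an inverse sequence of abelian groups. -/
def bondComp (A : ℕ → AddCommGrpCat.{u}) (f : ∀ i, A (i + 1) ⟶ A i) :
    (i j : ℕ) → i ≤ j → (A j ⟶ A i)
  | i, 0, h => by
      obtain rfl : i = 0 := Nat.le_zero.mp h
      exact 𝟙 (A 0)
  | i, j + 1, h =>
      if h' : i = j + 1 then by subst h'; exact 𝟙 (A (j + 1))
      else f j ≫ bondComp A f i j (by omega)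

/-- A pro-isomorphism (commuting ladder diagram after passing to subsequences)
between two inverse sequences of abelian groups. -/
structure ProIso (A : ℕ → AddCommGrpCat.{u}) (f : ∀ i, A (i + 1) ⟶ A i)
    (B : ℕ → AddCommGrpCat.{u}) (g : ∀ i, B (i + 1) ⟶ B i) where
  I : ℕ → ℕ
  J : ℕ → ℕ
  strictI : StrictMono I
  strictJ : StrictMono J
  hIJ : ∀ k, I k ≤ J k
  hJI : ∀ k, J k ≤ I (k + 1)
  d : ∀ k, B (J k) ⟶ A (I k)
  u : ∀ k, A (I (k + 1)) ⟶ B (J k)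
  comm₁ : ∀ k, u k ≫ d k =
    bondComp A f (I k) (I (k + 1)) (le_of_lt (strictI (Nat.lt_succ_self k)))
  comm₂ : ∀ k, d (k + 1) ≫ u k =
    bondComp B g (J k) (J (k + 1)) (le_of_lt (strictJ (Nat.lt_succ_self k)))

/-- The homomorphism `(g_i) ↦ (g_i − λ_{i+1} g_{i+1})` whose cokernel is `lim¹`. -/
def shiftHom (A : ℕ → AddCommGrpCat.{u}) (f : ∀ i, A (i + 1) ⟶ A i) :
    (∀ i, A i) →+ (∀ i, A i) where
  toFun x := fun i => x i - f i (x (i + 1))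
  map_zero' := by funext i; simp
  map_add' a b := by funext i; simp; abel

/-- The derived limit `lim¹` of an inverse sequence of abelian groups: the quotient of
the product `∏ A i` by the subgroup `{ (g_i − λ_{i+1} g_{i+1}) : g ∈ ∏ A i }`. -/
def lim1 (A : ℕ → AddCommGrpCat.{u}) (f : ∀ i, A (i + 1) ⟶ A i) : Type u :=
  (∀ i, A i) ⧸ (shiftHom A f).range

noncomputable instance (A : ℕ → AddCommGrpCat.{u}) (f : ∀ i, A (i + 1) ⟶ A i) :
    AddCommGroup (lim1 A f) :=
  QuotientAddGroup.Quotient.addCommGroup _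

/-!
Passing to a subsequence `A ∘ φ` does not change `lim¹`: summing each block `[φ k, φ (k + 1))`
down to `A (φ k)` is a chain map `collapse`, and placing `w k` at position `φ k` (zero elsewhere)
is a chain map `spread` up to the correction `fillGaps`; `collapse ∘ spread = id`, while
`spread ∘ collapse` differs from the identity by the image of `shiftHom`, namely of the partial
block sums `gapSum`. The rungs `d` and `u` of a ladder between two subsequences are chain maps
whose composites differ from the identity by `shiftHom` itself, so they too are inverse on `lim¹`.
-/

namespace QuotientAddGroup

variable {G H : Type*} [AddCommGroup G] [AddCommGroup H] {N : AddSubgroup G} {M : AddSubgroup H}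

def addEquivOfInvMod (φ : G →+ H) (ψ : H →+ G) (hφ : N ≤ M.comap φ) (hψ : M ≤ N.comap ψ)
    (hψφ : ∀ x, ψ (φ x) - x ∈ N) (hφψ : ∀ y, φ (ψ y) - y ∈ M) : G ⧸ N ≃+ H ⧸ M where
  toFun := map N M φ hφ
  invFun := map M N ψ hψ
  left_inv z := by
    induction z using QuotientAddGroup.induction_on with
    | H x => rw [map_mk, map_mk, eq_iff_sub_mem]; exact hψφ x
  right_inv z := by
    induction z using QuotientAddGroup.induction_on with
    | H y => rw [map_mk, map_mk, eq_iff_sub_mem]; exact hφψ y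
  map_add' := map_add _

end QuotientAddGroup

lemma AddMonoidHom.range_le_comap_range {G G' H H' : Type*} [AddGroup G] [AddGroup G']
    [AddGroup H] [AddGroup H'] {s : G →+ G'} {t : H →+ H'} {p : G' →+ H'} (q : G → H)
    (h : ∀ x, p (s x) = t (q x)) : s.range ≤ t.range.comap p := by
  rintro _ ⟨x, rfl⟩
  exact ⟨q x, (h x).symm⟩

section InverseSequence

variable (A : ℕ → AddCommGrpCat.{u}) (f : ∀ i, A (i + 1) ⟶ A i)

/-- `bondComp` extended by zero to `j < i`, so that it can be summed over intervals. -/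
noncomputable def bond (i j : ℕ) : A j ⟶ A i :=
  if h : i ≤ j then bondComp A f i j h else 0

lemma bond_of_le {i j : ℕ} (h : i ≤ j) : bond A f i j = bondComp A f i j h := dif_pos h

lemma bond_self (i : ℕ) : bond A f i i = 𝟙 (A i) := by
  rw [bond_of_le A f le_rfl]
  cases i with
  | zero => rfl
  | succ n => rw [bondComp, dif_pos rfl]

lemma bond_succ_right {i j : ℕ} (h : i ≤ j) : bond A f i (j + 1) = f j ≫ bond A f i j := by
  rw [bond_of_le A f h, bond_of_le A f (by omega), bondComp, dif_neg (by omega)]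

lemma bond_succ_left {i j : ℕ} (h : i < j) : bond A f i j = bond A f (i + 1) j ≫ f i := by
  induction j with
  | zero => omega
  | succ j ih =>
    rcases Nat.lt_or_ge i j with h | h
    · rw [bond_succ_right A f (by omega), bond_succ_right A f (by omega), ih h, Category.assoc]
    · obtain rfl : i = j := by omega
      rw [bond_succ_right A f le_rfl, bond_self, bond_self, Category.comp_id, Category.id_comp]

lemma bond_self_apply (i : ℕ) (z : A i) : bond A f i i z = z := by
  rw [bond_self]; rfl

lemma bond_succ_right_apply {i j : ℕ} (h : i ≤ j) (z : A (j + 1)) :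
    bond A f i (j + 1) z = bond A f i j (f j z) := by
  rw [bond_succ_right A f h]; rfl

lemma apply_bond_succ {i j : ℕ} (h : i < j) (z : A j) :
    f i (bond A f (i + 1) j z) = bond A f i j z := by
  rw [bond_succ_left A f h]; rfl

lemma shiftHom_apply (x : ∀ i, A i) (i : ℕ) : shiftHom A f x i = x i - f i (x (i + 1)) := rfl

noncomputable def subseqBond (φ : ℕ → ℕ) (k : ℕ) : (A ∘ φ) (k + 1) ⟶ (A ∘ φ) k :=
  bond A f (φ k) (φ (k + 1))

noncomputable def collapse (φ : ℕ → ℕ) : (∀ i, A i) →+ ∀ k, A (φ k) where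
  toFun x k := ∑ j ∈ Finset.Ico (φ k) (φ (k + 1)), bond A f (φ k) j (x j)
  map_zero' := by funext k; simp
  map_add' x y := by funext k; simp [Finset.sum_add_distrib]

lemma collapse_apply (φ : ℕ → ℕ) (x : ∀ i, A i) (k : ℕ) :
    collapse A f φ x k = ∑ j ∈ Finset.Ico (φ k) (φ (k + 1)), bond A f (φ k) j (x j) := rfl

lemma collapse_shiftHom {φ : ℕ → ℕ} (hφ : Monotone φ) (x : ∀ i, A i) :
    collapse A f φ (shiftHom A f x) = shiftHom (A ∘ φ) (subseqBond A f φ) (fun k => x (φ k)) := by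
  funext k
  have telescope : ∀ j ∈ Finset.Ico (φ k) (φ (k + 1)), bond A f (φ k) j (shiftHom A f x j)
      = -(bond A f (φ k) (j + 1) (x (j + 1)) - bond A f (φ k) j (x j)) := by
    intro j hj
    rw [shiftHom_apply, map_sub, bond_succ_right_apply A f (Finset.mem_Ico.mp hj).1, neg_sub]
  rw [collapse_apply, Finset.sum_congr rfl telescope, Finset.sum_neg_distrib,
    Finset.sum_Ico_sub (fun j => bond A f (φ k) j (x j)) (hφ k.le_succ), neg_sub, bond_self_apply]
  rfl

variable {φ : ℕ → ℕ} (hφ : StrictMono φ)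

def nextIdx (i : ℕ) : ℕ := Nat.find (⟨i, hφ.le_apply⟩ : ∃ k, i ≤ φ k)

lemma le_nextIdx (i : ℕ) : i ≤ φ (nextIdx hφ i) := Nat.find_spec (⟨i, hφ.le_apply⟩ : ∃ k, i ≤ φ k)

lemma nextIdx_apply (k : ℕ) : nextIdx hφ (φ k) = k :=
  (Nat.find_eq_iff _).2 ⟨le_rfl, fun _ hm => not_le.2 (hφ hm)⟩

lemma nextIdx_apply_succ (k : ℕ) : nextIdx hφ (φ k + 1) = k + 1 :=
  (Nat.find_eq_iff _).2
    ⟨hφ k.lt_succ_self, fun _ hm => not_le.2 (Nat.lt_succ_of_le (hφ.monotone (by omega)))⟩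

lemma nextIdx_succ_of_lt {i : ℕ} (h : i < φ (nextIdx hφ i)) : nextIdx hφ (i + 1) = nextIdx hφ i :=
  (Nat.find_eq_iff _).2 ⟨h, fun m hm => by
    have := Nat.find_min (⟨i, hφ.le_apply⟩ : ∃ k, i ≤ φ k) hm; omega⟩

/-- Puts `w k` at position `φ k` and zero elsewhere. -/
noncomputable def spread : (∀ k, A (φ k)) →+ ∀ i, A i where
  toFun w i := if φ (nextIdx hφ i) = i then bond A f i _ (w (nextIdx hφ i)) else 0
  map_zero' := by funext i; simp
  map_add' w w' := by funext i; by_cases h : φ (nextIdx hφ i) = i <;> simp [h]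

lemma spread_apply_self (w : ∀ k, A (φ k)) (k : ℕ) : spread A f hφ w (φ k) = w k := by
  show (if _ then _ else _) = _
  rw [nextIdx_apply, if_pos rfl, bond_self_apply]

lemma spread_of_lt (w : ∀ k, A (φ k)) {i : ℕ} (h : i < φ (nextIdx hφ i)) :
    spread A f hφ w i = 0 :=
  if_neg h.ne'

lemma spread_of_notMem_range (w : ∀ k, A (φ k)) {i : ℕ} (h : i ∉ Set.range φ) :
    spread A f hφ w i = 0 :=
  if_neg fun e => h ⟨_, e⟩

lemma collapse_spread (w : ∀ k, A (φ k)) : collapse A f φ (spread A f hφ w) = w := by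
  funext k
  rw [collapse_apply, Finset.sum_eq_single_of_mem (φ k) (by simp [hφ k.lt_succ_self]),
    spread_apply_self, bond_self_apply]
  rintro _ hj hne
  rw [spread_of_notMem_range A f hφ w, map_zero]
  rintro ⟨m, rfl⟩
  rw [Finset.mem_Ico, hφ.le_iff_le, hφ.lt_iff_lt] at hj
  exact hne (congrArg φ (by omega))

noncomputable def fillGaps (w : ∀ k, A (φ k)) (i : ℕ) : A i :=
  bond A f i (φ (nextIdx hφ i)) (w (nextIdx hφ i))

lemma fillGaps_apply_self (w : ∀ k, A (φ k)) (k : ℕ) : fillGaps A f hφ w (φ k) = w k := by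
  rw [fillGaps, nextIdx_apply, bond_self_apply]

lemma apply_fillGaps_succ (w : ∀ k, A (φ k)) (i : ℕ) :
    f i (fillGaps A f hφ w (i + 1))
      = bond A f i (φ (nextIdx hφ (i + 1))) (w (nextIdx hφ (i + 1))) :=
  apply_bond_succ A f (i.lt_succ_self.trans_le (le_nextIdx hφ (i + 1))) _

lemma shiftHom_fillGaps (w : ∀ k, A (φ k)) :
    shiftHom A f (fillGaps A f hφ w) = spread A f hφ (shiftHom (A ∘ φ) (subseqBond A f φ) w) := by
  funext i
  rw [shiftHom_apply, apply_fillGaps_succ]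
  rcases (le_nextIdx hφ i).lt_or_eq with h | h
  · rw [nextIdx_succ_of_lt hφ h, spread_of_lt A f hφ _ h, fillGaps, sub_self]
  · obtain ⟨k, rfl⟩ : ∃ k, φ k = i := ⟨_, h.symm⟩
    rw [nextIdx_apply_succ, fillGaps_apply_self, spread_apply_self]
    rfl

noncomputable def gapSum (x : ∀ i, A i) (i : ℕ) : A i :=
  ∑ j ∈ Finset.Ico i (φ (nextIdx hφ i)), bond A f i j (x j)

lemma apply_gapSum_succ (x : ∀ i, A i) (i : ℕ) :
    f i (gapSum A f hφ x (i + 1))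
      = ∑ j ∈ Finset.Ico (i + 1) (φ (nextIdx hφ (i + 1))), bond A f i j (x j) := by
  rw [gapSum, map_sum]
  exact Finset.sum_congr rfl fun j hj => apply_bond_succ A f (by simp at hj; omega) _

lemma shiftHom_gapSum (x : ∀ i, A i) :
    shiftHom A f (gapSum A f hφ x) = x - spread A f hφ (collapse A f φ x) := by
  funext i
  rw [shiftHom_apply, apply_gapSum_succ, Pi.sub_apply]
  rcases (le_nextIdx hφ i).lt_or_eq with h | h
  · rw [nextIdx_succ_of_lt hφ h, spread_of_lt A f hφ _ h, gapSum,
      Finset.sum_eq_sum_Ico_succ_bot h, bond_self_apply]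
    abel
  · obtain ⟨k, rfl⟩ : ∃ k, φ k = i := ⟨_, h.symm⟩
    rw [nextIdx_apply_succ, spread_apply_self, gapSum, nextIdx_apply, Finset.Ico_self,
      Finset.sum_empty, collapse_apply, Finset.sum_eq_sum_Ico_succ_bot (hφ k.lt_succ_self),
      bond_self_apply]
    abel

noncomputable def lim1SubseqEquiv : lim1 A f ≃+ lim1 (A ∘ φ) (subseqBond A f φ) :=
  QuotientAddGroup.addEquivOfInvMod (collapse A f φ) (spread A f hφ)
    (AddMonoidHom.range_le_comap_range _ (collapse_shiftHom A f hφ.monotone))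
    (AddMonoidHom.range_le_comap_range _ fun w => (shiftHom_fillGaps A f hφ w).symm)
    (fun x => ⟨-gapSum A f hφ x, by rw [map_neg, shiftHom_gapSum, neg_sub]⟩)
    (fun w => by rw [collapse_spread, sub_self]; exact zero_mem _)

end InverseSequence

namespace ProIso

variable {A : ℕ → AddCommGrpCat.{u}} {f : ∀ i, A (i + 1) ⟶ A i}
  {B : ℕ → AddCommGrpCat.{u}} {g : ∀ i, B (i + 1) ⟶ B i} (P : ProIso A f B g)

def down : (∀ k, (B ∘ P.J) k) →+ ∀ k, (A ∘ P.I) k :=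
  AddMonoidHom.pi fun k => (P.d k).hom.comp (Pi.evalAddMonoidHom _ k)

def up : (∀ k, (A ∘ P.I) k) →+ ∀ k, (B ∘ P.J) k :=
  AddMonoidHom.pi fun k => (P.u k).hom.comp (Pi.evalAddMonoidHom _ (k + 1))

lemma down_apply (w : ∀ k, (B ∘ P.J) k) (k : ℕ) : P.down w k = P.d k (w k) := rfl

lemma up_apply (x : ∀ k, (A ∘ P.I) k) (k : ℕ) : P.up x k = P.u k (x (k + 1)) := rfl

lemma d_u_apply (k : ℕ) (z : A (P.I (k + 1))) :
    P.d k (P.u k z) = bond A f (P.I k) (P.I (k + 1)) z := by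
  rw [bond_of_le A f (P.strictI k.lt_succ_self).le, ← P.comm₁ k]
  rfl

lemma u_d_apply (k : ℕ) (z : B (P.J (k + 1))) :
    P.u k (P.d (k + 1) z) = bond B g (P.J k) (P.J (k + 1)) z := by
  rw [bond_of_le B g (P.strictJ k.lt_succ_self).le, ← P.comm₂ k]
  rfl

lemma down_shiftHom (w : ∀ k, (B ∘ P.J) k) :
    P.down (shiftHom (B ∘ P.J) (subseqBond B g P.J) w)
      = shiftHom (A ∘ P.I) (subseqBond A f P.I) (P.down w) := by
  funext k
  rw [down_apply, shiftHom_apply, shiftHom_apply, map_sub, down_apply, down_apply, subseqBond,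
    subseqBond, ← u_d_apply, d_u_apply]

lemma up_shiftHom (x : ∀ k, (A ∘ P.I) k) :
    P.up (shiftHom (A ∘ P.I) (subseqBond A f P.I) x)
      = shiftHom (B ∘ P.J) (subseqBond B g P.J) (P.up x) := by
  funext k
  rw [up_apply, shiftHom_apply, shiftHom_apply, map_sub, up_apply, up_apply, subseqBond,
    subseqBond, ← d_u_apply, u_d_apply]

lemma down_up (x : ∀ k, (A ∘ P.I) k) :
    P.down (P.up x) = x - shiftHom (A ∘ P.I) (subseqBond A f P.I) x := by
  funext k
  exact (P.d_u_apply k _).trans (sub_sub_cancel _ _).symm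

lemma up_down (w : ∀ k, (B ∘ P.J) k) :
    P.up (P.down w) = w - shiftHom (B ∘ P.J) (subseqBond B g P.J) w := by
  funext k
  exact (P.u_d_apply k _).trans (sub_sub_cancel _ _).symm

noncomputable def lim1Equiv :
    lim1 (A ∘ P.I) (subseqBond A f P.I) ≃+ lim1 (B ∘ P.J) (subseqBond B g P.J) :=
  QuotientAddGroup.addEquivOfInvMod P.up P.down
    (AddMonoidHom.range_le_comap_range _ P.up_shiftHom)
    (AddMonoidHom.range_le_comap_range _ P.down_shiftHom)
    (fun x => ⟨-x, by rw [map_neg, down_up, sub_sub_cancel_left]⟩)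
    (fun w => ⟨-w, by rw [map_neg, up_down, sub_sub_cancel_left]⟩)

end ProIso

/-- Pro-isomorphic inverse sequences of abelian groups have isomorphic derived limits. -/
theorem lim1_iso_of_proIso (A : ℕ → AddCommGrpCat.{u}) (f : ∀ i, A (i + 1) ⟶ A i)
    (B : ℕ → AddCommGrpCat.{u}) (g : ∀ i, B (i + 1) ⟶ B i)
    (h : Nonempty (ProIso A f B g)) :
    Nonempty (lim1 A f ≃+ lim1 B g) := by
  obtain ⟨P⟩ := h
  exact ⟨(lim1SubseqEquiv A f P.strictI).trans
    (P.lim1Equiv.trans (lim1SubseqEquiv B g P.strictJ).symm)⟩
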